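/- Let n ≥ 2 and let λ = (λ_1, ..., λ_n) ∈ ℝ^n with λ_1 ≥ λ_2 ≥ ... ≥ λ_n. If Σ_{i=1}^n arctan(λ_i) ≥ (n-2)·π/2, then λ_1 + (n-1)·λ_n ≥ 0. -/
import Mathlib


open Real Finset

lemma arctan_add_le' {a b : ℝ} (ha : 0 ≤ a) (hb : 0 ≤ b) :
    Real.arctan (a + b) ≤ Real.arctan a + Real.arctan b := by
  by_cases h : a * b < 1
  · rw [Real.arctan_add h]
    apply Real.arctan_strictMono.monotone
    have h1 : 0 < 1 - a * b := by linarith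
    have h2 : 1 - a * b ≤ 1 := by nlinarith
    rw [le_div_iff₀ h1]
    nlinarith
  · push_neg at h
    have hb0 : 0 < b := by nlinarith
    have ha0 : 0 < a := by nlinarith
    have : b⁻¹ ≤ a := by
      rw [inv_le_iff_one_le_mul₀ hb0]; nlinarith
    have h2 : Real.arctan b⁻¹ ≤ Real.arctan a := Real.arctan_strictMono.monotone this
    rw [Real.arctan_inv_of_pos hb0] at h2
    have := Real.arctan_lt_pi_div_two (a + b)
    linarith

lemma arctan_nsmul_le {s : ℝ} (hs : 0 ≤ s) (k : ℕ) :
    Real.arctan ((k : ℝ) * s) ≤ (k : ℝ) * Real.arctan s := by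
  induction k with
  | zero => simp
  | succ k ih =>
    push_cast
    have h1 : Real.arctan ((k : ℝ) * s + s) ≤ Real.arctan ((k : ℝ) * s) + Real.arctan s :=
      arctan_add_le' (by positivity) hs
    calc Real.arctan (((k : ℝ) + 1) * s) = Real.arctan ((k : ℝ) * s + s) := by ring_nf
      _ ≤ Real.arctan ((k : ℝ) * s) + Real.arctan s := h1
      _ ≤ (k : ℝ) * Real.arctan s + Real.arctan s := by linarith
      _ = ((k : ℝ) + 1) * Real.arctan s := by ring

theorem stmt_1 (n : ℕ) (hn : 2 ≤ n) (lam : Fin n → ℝ)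
    (hord : ∀ i j : Fin n, i ≤ j → lam j ≤ lam i)
    (hsum : ((n : ℝ) - 2) * π / 2 ≤ ∑ i, Real.arctan (lam i)) :
    0 ≤ lam ⟨0, by omega⟩ + ((n : ℝ) - 1) * lam ⟨n - 1, by omega⟩ := by
  set i0 : Fin n := ⟨0, by omega⟩ with hi0
  set iN : Fin n := ⟨n - 1, by omega⟩ with hiN
  have hle : ∀ i : Fin n, lam i ≤ lam i0 := fun i => hord i0 i (by simp [hi0, Fin.le_def])
  have hNle : lam iN ≤ lam i0 := hle iN
  by_cases hN : 0 ≤ lam iN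
  · have : 0 ≤ lam i0 := le_trans hN hNle
    have hn1 : (0:ℝ) ≤ (n:ℝ) - 1 := by
      have : (2:ℝ) ≤ (n:ℝ) := by exact_mod_cast hn
      linarith
    nlinarith
  push_neg at hN
  set μ : ℝ := -lam iN with hμ
  have hμpos : 0 < μ := by simp [hμ]; linarith
  -- split the sum
  have hsplit : ∑ i, Real.arctan (lam i)
      = ∑ i ∈ univ.erase iN, Real.arctan (lam i) + Real.arctan (lam iN) := by
    rw [Finset.sum_erase_add _ _ (Finset.mem_univ iN)]
  have hcard : (univ.erase iN).card = n - 1 := by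
    rw [Finset.card_erase_of_mem (Finset.mem_univ iN), Finset.card_univ, Fintype.card_fin]
  have hbound : ∑ i ∈ univ.erase iN, Real.arctan (lam i)
      ≤ ((n : ℝ) - 1) * Real.arctan (lam i0) := by
    have := Finset.sum_le_card_nsmul (univ.erase iN) (fun i => Real.arctan (lam i))
      (Real.arctan (lam i0)) (fun i _ => Real.arctan_strictMono.monotone (hle i))
    rw [hcard] at this
    have hcast : ((n - 1 : ℕ) : ℝ) = (n : ℝ) - 1 := by
      have : 1 ≤ n := by omega
      push_cast [this]; ring
    calc ∑ i ∈ univ.erase iN, Real.arctan (lam i)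
        ≤ (n - 1) • Real.arctan (lam i0) := this
      _ = ((n : ℝ) - 1) * Real.arctan (lam i0) := by
          rw [nsmul_eq_mul, hcast]
  have harcN : Real.arctan (lam iN) = -Real.arctan μ := by
    rw [hμ, Real.arctan_neg, neg_neg]
  have h1 : ((n : ℝ) - 2) * π / 2 + Real.arctan μ ≤ ((n : ℝ) - 1) * Real.arctan (lam i0) := by
    rw [hsplit, harcN] at hsum; linarith
  have hn1 : (1:ℝ) ≤ (n:ℝ) - 1 := by
    have : (2:ℝ) ≤ (n:ℝ) := by exact_mod_cast hn
    linarith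
  have h2 : ((n : ℝ) - 1) * (π / 2 - Real.arctan (lam i0)) ≤ π / 2 - Real.arctan μ := by
    nlinarith
  -- lam i0 > 0
  have harcμ_pos : 0 < Real.arctan μ := by
    rw [← Real.arctan_zero]; exact Real.arctan_strictMono hμpos
  have harc0_pos : 0 < Real.arctan (lam i0) := by
    have hlt : Real.arctan μ < π / 2 := Real.arctan_lt_pi_div_two μ
    have hpi : 0 < π := Real.pi_pos
    nlinarith [Real.arctan_lt_pi_div_two (lam i0)]
  have h0pos : 0 < lam i0 := by
    by_contra h
    push_neg at h
    have : Real.arctan (lam i0) ≤ Real.arctan 0 := Real.arctan_strictMono.monotone h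
    rw [Real.arctan_zero] at this; linarith
  -- key comparison via inverses
  have hinv0 : Real.arctan (lam i0)⁻¹ = π / 2 - Real.arctan (lam i0) :=
    Real.arctan_inv_of_pos h0pos
  have hinvμ : Real.arctan μ⁻¹ = π / 2 - Real.arctan μ :=
    Real.arctan_inv_of_pos hμpos
  have hkey : Real.arctan μ⁻¹ ≤ ((n : ℝ) - 1) * Real.arctan (((n : ℝ) - 1) * μ)⁻¹ := by
    have hs : (0:ℝ) ≤ (((n : ℝ) - 1) * μ)⁻¹ := by positivity
    have := arctan_nsmul_le hs (n - 1)
    have hcast : ((n - 1 : ℕ) : ℝ) = (n : ℝ) - 1 := by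
      have h1n : 1 ≤ n := by omega
      push_cast [h1n]; ring
    rw [hcast] at this
    have heq : ((n : ℝ) - 1) * (((n : ℝ) - 1) * μ)⁻¹ = μ⁻¹ := by
      field_simp
    rwa [heq] at this
  have h3 : ((n : ℝ) - 1) * Real.arctan (lam i0)⁻¹ ≤ Real.arctan μ⁻¹ := by
    rw [hinv0, hinvμ]; exact h2
  have h4 : Real.arctan (lam i0)⁻¹ ≤ Real.arctan (((n : ℝ) - 1) * μ)⁻¹ := by
    have hn1' : (0:ℝ) < (n:ℝ) - 1 := by linarith
    have := le_trans h3 hkey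
    nlinarith
  have h5 : (lam i0)⁻¹ ≤ (((n : ℝ) - 1) * μ)⁻¹ := by
    by_contra h
    push_neg at h
    exact absurd (Real.arctan_strictMono h) (not_lt.mpr h4)
  have h6 : ((n : ℝ) - 1) * μ ≤ lam i0 := by
    have hp : (0:ℝ) < ((n : ℝ) - 1) * μ := by nlinarith
    rwa [inv_le_inv₀ h0pos hp] at h5
  have : lam iN = -μ := by simp [hμ]
  rw [this]; linarith
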